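/- arXiv:1304.0269 — 2 statements merged into one kernel-verified Lean document; each statement's English description precedes it below -/
import Mathlib

section
/- For any positive integer n and nonnegative integer a, the ordinary multiple harmonic sum satisfies H_n^*({2}^a) = 2 ∑_{k=1}^n (C(n,k)/C(n+k,n)) (-1)^{k-1}/k^{2a}, the q→1 limit case of the q-identity for strings of twos. -/
open Finset

/-- q-analogue of a natural number: [m]_q = (1-q^m)/(1-q). -/
noncomputable def qnum (q : ℝ) (m : ℕ) : ℝ := (1 - q ^ m) / (1 - q)

/-- q-Pochhammer (q;q)_n = ∏_{k=0}^{n-1} (1 - q^{k+1}). -/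
noncomputable def qPoch (q : ℝ) (n : ℕ) : ℝ := ∏ k ∈ Finset.range n, (1 - q ^ (k + 1))

/-- Gaussian q-binomial coefficient, 0 when m > n. -/
noncomputable def qbinom (q : ℝ) (n m : ℕ) : ℝ :=
  if m ≤ n then qPoch q n / (qPoch q m * qPoch q (n - m)) else 0

/-- q-multiple harmonic star sum H_n^*[s₁,…,s_m]. -/
noncomputable def qHstar (q : ℝ) : List ℕ → ℕ → ℝ
  | [], _ => 1
  | s :: rest, n => ∑ k ∈ Finset.Icc 1 n, q ^ k / qnum q k ^ s * qHstar q rest k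

/-- q-multiple zeta star value ζ_q^*[s₁,…,s_m]. -/
noncomputable def qZetaStar (q : ℝ) : List ℕ → ℝ
  | [] => 1
  | s :: rest => ∑' k : ℕ, q ^ (k + 1) / qnum q (k + 1) ^ s * qHstar q rest (k + 1)

/-- strict multiple harmonic sum ∑_{n ≥ k₁ > … > k_r ≥ 1} ∏ 1/k_j^{p_j}. -/
noncomputable def Hstrict : List ℕ → ℕ → ℝ
  | [], _ => 1
  | p :: rest, n => ∑ k ∈ Finset.Icc 1 n, (1 : ℝ) / (k : ℝ) ^ p * Hstrict rest (k - 1)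

/-- binomial-weighted strict multiple harmonic sum Ĥ_n(p). -/
noncomputable def Hhat : List ℕ → ℕ → ℝ
  | [], _ => 1
  | p :: rest, n => ∑ k ∈ Finset.Icc 1 n,
      ((n.choose k : ℝ) / ((n + k).choose n)) * ((1 : ℝ) / (k : ℝ) ^ p) * Hstrict rest (k - 1)

/-- ordinary multiple harmonic star sum H_n^*(s₁,…,s_m). -/
noncomputable def HstarO : List ℕ → ℕ → ℝ
  | [], _ => 1
  | s :: rest, n => ∑ k ∈ Finset.Icc 1 n, (1 : ℝ) / (k : ℝ) ^ s * HstarO rest k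

/-- ordinary multiple zeta star value. -/
noncomputable def zetaStarO : List ℕ → ℝ
  | [] => 1
  | s :: rest => ∑' k : ℕ, (1 : ℝ) / ((k : ℝ) + 1) ^ s * HstarO rest (k + 1)

/-- Merge a list of parts according to a comma(true)/plus(false) pattern. -/
def mergeComp : ℕ → List ℕ → List Bool → List ℕ
  | a, [], _ => [a]
  | a, _ :: _, [] => [a]
  | a, b :: t, true :: bs => a :: mergeComp b t bs
  | a, b :: t, false :: bs => mergeComp (a + b) t bs

/-!
Write `c(n, k) = C(n, k) / C(n + k, n)`. Induction on `a`: since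
`H_n^*({2}^(a+1)) = ∑_{j ≤ n} H_j^*({2}^a) / j²`, exchanging the two sums reduces the
step to `∑_{j=k}^n c(j, k) / j² = c(n, k) / k²`, which telescopes because
`c(j, k) (j² - k²) = c(j - 1, k) j²`. The base case `a = 0` is
`∑_{k=1}^n (-1)^(k-1) c(n, k) = 1/2`, which telescopes against `(-1)^k (n + k) c(n, k)`
because `c(n, k + 1) (n + k + 1) = c(n, k) (n - k)`.
-/

noncomputable def binomRatio (n k : ℕ) : ℝ := n.choose k / (n + k).choose n

lemma binomRatio_zero_right (n : ℕ) : binomRatio n 0 = 1 := by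
  simp [binomRatio]

lemma binomRatio_of_lt {n k : ℕ} (h : n < k) : binomRatio n k = 0 := by
  simp [binomRatio, Nat.choose_eq_zero_of_lt h]

lemma binomRatio_succ_right (n k : ℕ) :
    binomRatio n (k + 1) * (n + k + 1) = binomRatio n k * (n - k) := by
  rcases lt_or_ge n k with hk | hk
  · simp [binomRatio_of_lt hk, binomRatio_of_lt (hk.trans k.lt_succ_self)]
  have hnum : (n.choose (k + 1) : ℝ) * (k + 1) = n.choose k * (n - k) := by
    have := congrArg (Nat.cast : ℕ → ℝ) (Nat.choose_succ_right_eq n k)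
    push_cast [Nat.cast_sub hk] at this
    exact this
  have hden : ((n + (k + 1)).choose n : ℝ) * (k + 1) = (n + k).choose n * (n + k + 1) := by
    have := Nat.choose_mul_succ_eq (n + k) n
    rw [show n + k + 1 - n = k + 1 by omega] at this
    exact_mod_cast this.symm
  have hB : (0 : ℝ) < (n + k).choose n := by exact_mod_cast Nat.choose_pos (by omega)
  have hB' : (0 : ℝ) < (n + (k + 1)).choose n := by exact_mod_cast Nat.choose_pos (by omega)
  unfold binomRatio
  rw [div_mul_eq_mul_div, div_mul_eq_mul_div, div_eq_div_iff hB'.ne' hB.ne']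
  refine mul_right_cancel₀ (by positivity : (k : ℝ) + 1 ≠ 0) ?_
  linear_combination ((n + k).choose n * (n + k + 1) : ℝ) * hnum
    - (n.choose k * (n - k) : ℝ) * hden

lemma binomRatio_succ_left (n k : ℕ) :
    binomRatio (n + 1) k * ((n + 1) ^ 2 - k ^ 2) = binomRatio n k * (n + 1) ^ 2 := by
  rcases lt_or_ge (n + 1) k with hk | hk
  · simp [binomRatio_of_lt hk, binomRatio_of_lt (n.lt_succ_self.trans hk)]
  have hnum : ((n + 1).choose k : ℝ) * (n + 1 - k) = n.choose k * (n + 1) := by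
    have := congrArg (Nat.cast : ℕ → ℝ) (Nat.choose_mul_succ_eq n k)
    push_cast [Nat.cast_sub hk] at this
    exact this.symm
  have hden : ((n + 1 + k).choose (n + 1) : ℝ) * (n + 1) = (n + k).choose n * (n + k + 1) := by
    have := Nat.add_one_mul_choose_eq (n + k) n
    rw [show n + k + 1 = n + 1 + k by omega] at this
    have := congrArg (Nat.cast : ℕ → ℝ) this
    push_cast at this
    linear_combination -this
  have hB : (0 : ℝ) < (n + k).choose n := by exact_mod_cast Nat.choose_pos (by omega)
  have hB' : (0 : ℝ) < (n + 1 + k).choose (n + 1) := by exact_mod_cast Nat.choose_pos (by omega)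
  unfold binomRatio
  rw [div_mul_eq_mul_div, div_mul_eq_mul_div, div_eq_div_iff hB'.ne' hB.ne']
  refine mul_right_cancel₀ (by positivity : (n : ℝ) + 1 ≠ 0) ?_
  linear_combination ((n + 1 + k) * (n + k).choose n * (n + 1) : ℝ) * hnum
    - (n.choose k * (n + 1) ^ 2 : ℝ) * hden

lemma sum_binomRatio_mul_neg_one_pow {n : ℕ} (hn : n ≠ 0) :
    ∑ k ∈ Icc 1 n, binomRatio n k * (-1) ^ (k - 1) = 1 / 2 := by
  set S : ℕ → ℝ := fun k => (-1) ^ k * (n + k) * binomRatio n k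
  have hstep : ∀ k ∈ Icc 1 n,
      binomRatio n k * (-1) ^ (k - 1) = (S (k + 1) - S k) / (2 * n) := by
    intro k hk
    obtain ⟨j, rfl⟩ := Nat.exists_eq_add_of_le' (mem_Icc.1 hk).1
    have := binomRatio_succ_right n (j + 1)
    simp only [S, Nat.add_sub_cancel]
    field_simp
    push_cast at this ⊢
    linear_combination -(-1) ^ j * this
  have hS1 : S 1 = -n := by
    have := binomRatio_succ_right n 0
    simp only [S, binomRatio_zero_right] at this ⊢
    push_cast at this
    linear_combination -this
  have hS_succ : S (n + 1) = 0 := by simp [S, binomRatio_of_lt n.lt_succ_self]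
  rw [sum_congr rfl hstep, ← sum_div, sum_Icc_sub (by omega), hS_succ, hS1]
  field_simp
  ring

lemma sum_Icc_binomRatio_div_sq {k n : ℕ} (hk : k ≠ 0) (hkn : k ≤ n) :
    ∑ j ∈ Icc k n, binomRatio j k / j ^ 2 = binomRatio n k / k ^ 2 := by
  induction n, hkn using Nat.le_induction with
  | base => simp
  | succ n _ ih =>
    have := binomRatio_succ_left n k
    rw [sum_Icc_succ_top (by omega), ih]
    push_cast
    field_simp
    linear_combination -this

theorem stmt18 (n a : ℕ) (hn : 1 ≤ n) :
    HstarO (List.replicate a 2) n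
    = 2 * ∑ k ∈ Finset.Icc 1 n,
        ((n.choose k : ℝ) / ((n + k).choose n)) * (-1 : ℝ) ^ (k - 1) / (k : ℝ) ^ (2 * a) := by
  change _ = 2 * ∑ k ∈ Icc 1 n, binomRatio n k * (-1) ^ (k - 1) / (k : ℝ) ^ (2 * a)
  induction a generalizing n with
  | zero => simp [HstarO, sum_binomRatio_mul_neg_one_pow (by omega : n ≠ 0)]
  | succ a ih =>
    set g : ℕ → ℝ := fun k => 2 * (-1) ^ (k - 1) / (k : ℝ) ^ (2 * a)
    calc HstarO (List.replicate (a + 1) 2) n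
        = ∑ j ∈ Icc 1 n, ∑ k ∈ Icc 1 j, g k * (binomRatio j k / j ^ 2) := by
          rw [List.replicate_succ, HstarO]
          refine sum_congr rfl fun j hj => ?_
          rw [ih j (mem_Icc.1 hj).1, mul_sum, mul_sum]
          exact sum_congr rfl fun k _ => by ring
      _ = ∑ k ∈ Icc 1 n, g k * ∑ j ∈ Icc k n, binomRatio j k / j ^ 2 := by
          simp_rw [mul_sum]
          exact sum_comm' fun j k => by simp only [mem_Icc]; omega
      _ = 2 * ∑ k ∈ Icc 1 n, binomRatio n k * (-1) ^ (k - 1) / (k : ℝ) ^ (2 * (a + 1)) := by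
          rw [mul_sum]
          refine sum_congr rfl fun k hk => ?_
          obtain ⟨hk1, hkn⟩ := mem_Icc.1 hk
          rw [sum_Icc_binomRatio_div_sq (by omega) hkn]
          ring
end

section
/- For any positive integer n and nonnegative integer a, H_n^*({2}^a, 1) = 2 ∑_{k=1}^n (C(n,k)/C(n+k,n)) · 1/k^{2a+1}, the q→1 limit case of the corresponding q-identity; in the limit n→∞ this yields ζ^*({2}^a,1) = 2ζ(2a+1) for a ≥ 1. -/
open Finset

/-!
With `w n k = C(n,k) / C(n+k,n) = n!² / ((n-k)! (n+k)!)` one has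
`(n+1)² (w (n+1) k - w n k) = k² w (n+1) k`. Hence `F_a n = 2 ∑ₖ w n k / k^(2a+1)` satisfies
`(n+1)² (F_a (n+1) - F_a n) = F_(a-1) (n+1)`, the recursion of `H_n^*({2}^a, 1)` in `n`, and both
vanish at `n = 0`. For `a = 0` the recursion reads `(n+1)² (F_0 (n+1) - F_0 n) = n + 1` because
`2 ∑ₖ k w n k = n`, which telescopes since `(n+k+1) w n (k+1) = (n-k) w n k`.
As `n → ∞`, `w n k → 1` with `0 ≤ w ≤ 1`, so dominated convergence turns the finite identity
into `ζ^*({2}^a, 1) = 2 ζ(2a+1)`.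
-/

open Filter Topology Asymptotics

lemma sum_Icc_one_eq_sum_range {M : Type*} [AddCommMonoid M] (f : ℕ → M) (n : ℕ) :
    ∑ k ∈ Icc 1 n, f k = ∑ k ∈ range n, f (k + 1) := by
  induction n with
  | zero => rfl
  | succ n ih => rw [sum_Icc_succ_top (by omega), ih, sum_range_succ]

section StarSums

lemma HstarO_cons (s : ℕ) (l : List ℕ) (n : ℕ) :
    HstarO (s :: l) n = ∑ k ∈ range n, 1 / ((k : ℝ) + 1) ^ s * HstarO l (k + 1) := by
  rw [HstarO, sum_Icc_one_eq_sum_range]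
  push_cast
  rfl

lemma HstarO_cons_zero (s : ℕ) (l : List ℕ) : HstarO (s :: l) 0 = 0 := by
  simp [HstarO_cons]

lemma HstarO_cons_succ (s : ℕ) (l : List ℕ) (n : ℕ) :
    HstarO (s :: l) (n + 1) = HstarO (s :: l) n + 1 / ((n : ℝ) + 1) ^ s * HstarO l (n + 1) := by
  simp only [HstarO_cons, sum_range_succ]

lemma HstarO_nonneg (l : List ℕ) (n : ℕ) : 0 ≤ HstarO l n := by
  induction l generalizing n with
  | nil => exact zero_le_one
  | cons s l ih =>
    rw [HstarO_cons]
    exact sum_nonneg fun k _ => mul_nonneg (by positivity) (ih _)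

theorem zetaStarO_cons_eq_of_tendsto {s : ℕ} {l : List ℕ} {r : ℝ}
    (h : Tendsto (HstarO (s :: l)) atTop (𝓝 r)) : zetaStarO (s :: l) = r := by
  refine HasSum.tsum_eq ((hasSum_iff_tendsto_nat_of_nonneg (fun k => ?_) r).2 ?_)
  · exact mul_nonneg (by positivity) (HstarO_nonneg l _)
  · simpa only [← HstarO_cons] using h

end StarSums

section BinomWeight

noncomputable def binomWeight (n k : ℕ) : ℝ := (n.choose k : ℝ) / ((n + k).choose n)

lemma binomWeight_nonneg (n k : ℕ) : 0 ≤ binomWeight n k := by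
  unfold binomWeight; positivity

lemma binomWeight_le_one (n k : ℕ) : binomWeight n k ≤ 1 := by
  refine div_le_one_of_le₀ ?_ (Nat.cast_nonneg _)
  rw [Nat.choose_symm_add]
  exact_mod_cast Nat.choose_le_choose k (Nat.le_add_right n k)

lemma binomWeight_zero_right (n : ℕ) : binomWeight n 0 = 1 := by
  simp [binomWeight]

lemma binomWeight_of_lt {n k : ℕ} (h : n < k) : binomWeight n k = 0 := by
  simp [binomWeight, Nat.choose_eq_zero_of_lt h]

lemma binomWeight_eq_descFactorial_div (n k : ℕ) :
    binomWeight n k = (n.descFactorial k : ℝ) / ((n + k).descFactorial k) := by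
  rw [binomWeight, Nat.choose_symm_add, Nat.descFactorial_eq_factorial_mul_choose,
    Nat.descFactorial_eq_factorial_mul_choose, Nat.cast_mul, Nat.cast_mul,
    mul_div_mul_left _ _ (by positivity)]

lemma tendsto_binomWeight (k : ℕ) : Tendsto (binomWeight · k) atTop (𝓝 1) := by
  have hden : (fun n : ℕ => ((n + k).descFactorial k : ℝ)) ~[atTop]
      fun n : ℕ => ((n : ℝ) + k) ^ k := by
    simpa [Function.comp_def] using
      (isEquivalent_descFactorial k).comp_tendsto (tendsto_add_atTop_nat k)
  have hratio : Tendsto (fun n : ℕ => (n : ℝ) ^ k / ((n : ℝ) + k) ^ k) atTop (𝓝 1) := by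
    simpa only [div_pow, one_pow] using (tendsto_natCast_div_add_atTop (k : ℝ)).pow k
  simp_rw [binomWeight_eq_descFactorial_div]
  exact ((isEquivalent_descFactorial k).div hden).symm.tendsto_nhds hratio

lemma binomWeight_succ_right_eq (n k : ℕ) :
    ((n + k + 1 : ℕ) : ℝ) * binomWeight n (k + 1) = ((n - k : ℕ) : ℝ) * binomWeight n k := by
  have hlow : (n.choose (k + 1) : ℝ) * ((k + 1 : ℕ) : ℝ) = n.choose k * ((n - k : ℕ) : ℝ) := by
    exact_mod_cast Nat.choose_succ_right_eq n k
  have hup : ((n + k + 1).choose n : ℝ) * ((k + 1 : ℕ) : ℝ)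
      = (n + k).choose n * ((n + k + 1 : ℕ) : ℝ) := by
    have h := Nat.choose_mul_succ_eq (n + k) n
    rw [show n + k + 1 - n = k + 1 by omega] at h
    exact_mod_cast h.symm
  have hpos : ∀ j, (0 : ℝ) < ((n + j).choose n : ℕ) := fun j =>
    Nat.cast_pos.2 (Nat.choose_pos (Nat.le_add_right n j))
  have hk : ((k + 1 : ℕ) : ℝ) ≠ 0 := by positivity
  rw [binomWeight, binomWeight, mul_div_assoc', mul_div_assoc',
    div_eq_div_iff (hpos (k + 1)).ne' (hpos k).ne', ← add_assoc]
  refine mul_right_cancel₀ hk ?_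
  linear_combination ((n + k + 1 : ℕ) : ℝ) * ((n + k).choose n : ℝ) * hlow
    - ((n - k : ℕ) : ℝ) * (n.choose k : ℝ) * hup

lemma binomWeight_succ_left_eq (m k : ℕ) :
    ((m + 1 - k : ℕ) : ℝ) * ((m + 1 + k : ℕ) : ℝ) * binomWeight (m + 1) k
      = ((m : ℝ) + 1) ^ 2 * binomWeight m k := by
  have htop : (m.choose k : ℝ) * ((m : ℝ) + 1) = (m + 1).choose k * ((m + 1 - k : ℕ) : ℝ) := by
    exact_mod_cast Nat.choose_mul_succ_eq m k
  have hbot : ((m + k : ℝ) + 1) * (m + k).choose m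
      = (m + 1 + k).choose (m + 1) * ((m : ℝ) + 1) := by
    rw [Nat.add_right_comm]
    exact_mod_cast Nat.add_one_mul_choose_eq (m + k) m
  have hpos : ∀ j, (0 : ℝ) < ((j + k).choose j : ℕ) := fun j =>
    Nat.cast_pos.2 (Nat.choose_pos (Nat.le_add_right j k))
  rw [binomWeight, binomWeight, mul_div_assoc', mul_div_assoc',
    div_eq_div_iff (hpos (m + 1)).ne' (hpos m).ne']
  push_cast
  linear_combination -((m : ℝ) + 1 + k) * ((m + k).choose m : ℝ) * htop
    + ((m : ℝ) + 1) * (m.choose k : ℝ) * hbot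

lemma sq_mul_binomWeight_succ_sub {m k : ℕ} (hk : k ≤ m + 1) :
    ((m : ℝ) + 1) ^ 2 * (binomWeight (m + 1) k - binomWeight m k)
      = (k : ℝ) ^ 2 * binomWeight (m + 1) k := by
  have h := binomWeight_succ_left_eq m k
  push_cast [Nat.cast_sub hk] at h
  linear_combination h

lemma two_mul_sum_natCast_mul_binomWeight (n : ℕ) :
    2 * ∑ k ∈ Icc 1 n, (k : ℝ) * binomWeight n k = n := by
  set f : ℕ → ℝ := fun k => ((n : ℝ) + k) * binomWeight n k
  have hstep : ∀ k ∈ range (n + 1), 2 * ((k : ℝ) * binomWeight n k) = f k - f (k + 1) := by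
    intro k hk
    have h := binomWeight_succ_right_eq n k
    push_cast [f, Nat.cast_sub (Nat.lt_succ_iff.1 (mem_range.1 hk))] at h ⊢
    linear_combination h
  calc 2 * ∑ k ∈ Icc 1 n, (k : ℝ) * binomWeight n k
      = ∑ k ∈ range (n + 1), 2 * ((k : ℝ) * binomWeight n k) := by
        rw [sum_range_succ', sum_Icc_one_eq_sum_range, mul_sum]
        simp
    _ = f 0 - f (n + 1) := by rw [sum_congr rfl hstep, sum_range_sub']
    _ = n := by simp [f, binomWeight_zero_right, binomWeight_of_lt (Nat.lt_succ_self n)]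

lemma sq_mul_sum_binomWeight_succ_sub (g : ℕ → ℝ) (m : ℕ) :
    ((m : ℝ) + 1) ^ 2 * (∑ k ∈ Icc 1 (m + 1), binomWeight (m + 1) k * g k
        - ∑ k ∈ Icc 1 m, binomWeight m k * g k)
      = ∑ k ∈ Icc 1 (m + 1), binomWeight (m + 1) k * ((k : ℝ) ^ 2 * g k) := by
  have hext : ∑ k ∈ Icc 1 m, binomWeight m k * g k
      = ∑ k ∈ Icc 1 (m + 1), binomWeight m k * g k := by
    rw [sum_Icc_succ_top (by omega), binomWeight_of_lt (Nat.lt_succ_self m), zero_mul, add_zero]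
  rw [hext, ← sum_sub_distrib, mul_sum]
  refine sum_congr rfl fun k hk => ?_
  rw [← sub_mul, ← mul_assoc, sq_mul_binomWeight_succ_sub (mem_Icc.1 hk).2]
  ring

end BinomWeight

section OddSums

noncomputable def binomOddSum (a n : ℕ) : ℝ :=
  ∑ k ∈ Icc 1 n, binomWeight n k * (1 / (k : ℝ) ^ (2 * a + 1))

lemma binomOddSum_zero_right (a : ℕ) : binomOddSum a 0 = 0 := rfl

lemma binomOddSum_zero_succ (m : ℕ) :
    binomOddSum 0 (m + 1) = binomOddSum 0 m + 1 / (2 * ((m : ℝ) + 1)) := by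
  have hk : ∀ k : ℕ, binomWeight (m + 1) k * ((k : ℝ) ^ 2 * (1 / (k : ℝ) ^ (2 * 0 + 1)))
      = k * binomWeight (m + 1) k := fun k => by
    rcases eq_or_ne (k : ℝ) 0 with hk | hk
    · simp [hk]
    · field_simp
      ring
  have h : ((m : ℝ) + 1) ^ 2 * (binomOddSum 0 (m + 1) - binomOddSum 0 m)
      = ∑ k ∈ Icc 1 (m + 1), k * binomWeight (m + 1) k :=
    (sq_mul_sum_binomWeight_succ_sub _ m).trans (sum_congr rfl fun k _ => hk k)
  have hsum := two_mul_sum_natCast_mul_binomWeight (m + 1)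
  have hm : (m : ℝ) + 1 ≠ 0 := by positivity
  rw [← sub_eq_iff_eq_add', ← mul_right_inj' (pow_ne_zero 2 hm), h]
  push_cast at hsum
  field_simp
  linear_combination hsum

lemma binomOddSum_succ_succ (a m : ℕ) :
    binomOddSum (a + 1) (m + 1)
      = binomOddSum (a + 1) m + binomOddSum a (m + 1) / ((m : ℝ) + 1) ^ 2 := by
  have hk : ∀ k : ℕ, (k : ℝ) ^ 2 * (1 / (k : ℝ) ^ (2 * (a + 1) + 1)) = 1 / (k : ℝ) ^ (2 * a + 1) :=
    fun k => by
      rcases eq_or_ne (k : ℝ) 0 with hk | hk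
      · simp [hk]
      · field_simp
        ring
  have h : ((m : ℝ) + 1) ^ 2 * (binomOddSum (a + 1) (m + 1) - binomOddSum (a + 1) m)
      = binomOddSum a (m + 1) :=
    (sq_mul_sum_binomWeight_succ_sub _ m).trans (sum_congr rfl fun k _ => by rw [hk])
  rw [← sub_eq_iff_eq_add', ← h]
  field_simp

theorem HstarO_replicate_two_one (a n : ℕ) :
    HstarO (List.replicate a 2 ++ [1]) n = 2 * binomOddSum a n := by
  induction a generalizing n with
  | zero =>
    induction n with
    | zero => simp [HstarO_cons_zero, binomOddSum_zero_right]
    | succ m ih =>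
      simp only [List.replicate_zero, List.nil_append] at ih ⊢
      rw [HstarO_cons_succ, ih, binomOddSum_zero_succ, HstarO]
      field_simp
  | succ a iha =>
    induction n with
    | zero => simp [List.replicate_succ, HstarO_cons_zero, binomOddSum_zero_right]
    | succ m ih =>
      simp only [List.replicate_succ, List.cons_append] at ih ⊢
      rw [HstarO_cons_succ, ih, iha, binomOddSum_succ_succ]
      ring

lemma binomOddSum_eq_tsum (a n : ℕ) :
    binomOddSum a n = ∑' k : ℕ, binomWeight n (k + 1) * (1 / ((k : ℝ) + 1) ^ (2 * a + 1)) := by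
  rw [tsum_eq_sum (s := range n) fun k hk => by
      rw [binomWeight_of_lt (by simpa using hk), zero_mul],
    binomOddSum, sum_Icc_one_eq_sum_range]
  push_cast
  rfl

theorem tendsto_binomOddSum {a : ℕ} (ha : 1 ≤ a) :
    Tendsto (binomOddSum a) atTop (𝓝 (∑' k : ℕ, 1 / ((k : ℝ) + 1) ^ (2 * a + 1))) := by
  have hsum : Summable fun k : ℕ => 1 / ((k : ℝ) + 1) ^ (2 * a + 1) := by
    simpa using (summable_nat_add_iff 1).2
      (Real.summable_one_div_nat_pow.2 (by omega : 1 < 2 * a + 1))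
  simp_rw [funext (binomOddSum_eq_tsum a)]
  refine tendsto_tsum_of_dominated_convergence hsum (fun k => ?_) (.of_forall fun n k => ?_)
  · simpa using (tendsto_binomWeight (k + 1)).mul_const (1 / ((k : ℝ) + 1) ^ (2 * a + 1))
  · rw [Real.norm_eq_abs, abs_of_nonneg (mul_nonneg (binomWeight_nonneg _ _) (by positivity))]
    exact mul_le_of_le_one_left (by positivity) (binomWeight_le_one _ _)

end OddSums

theorem stmt19_general (n a : ℕ) :
    (HstarO (List.replicate a 2 ++ [1]) n
      = 2 * ∑ k ∈ Finset.Icc 1 n,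
          ((n.choose k : ℝ) / ((n + k).choose n)) * ((1 : ℝ) / (k : ℝ) ^ (2 * a + 1))) ∧
    (1 ≤ a →
      zetaStarO (List.replicate a 2 ++ [1])
        = 2 * ∑' k : ℕ, (1 : ℝ) / ((k : ℝ) + 1) ^ (2 * a + 1)) := by
  refine ⟨HstarO_replicate_two_one a n, fun ha => ?_⟩
  obtain ⟨b, rfl⟩ : ∃ b, a = b + 1 := ⟨a - 1, by omega⟩
  refine zetaStarO_cons_eq_of_tendsto (s := 2) (l := List.replicate b 2 ++ [1]) ?_
  exact ((tendsto_binomOddSum ha).const_mul 2).congr fun n =>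
    (HstarO_replicate_two_one (b + 1) n).symm

theorem stmt19 (n a : ℕ) (hn : 1 ≤ n) :
    (HstarO (List.replicate a 2 ++ [1]) n
      = 2 * ∑ k ∈ Finset.Icc 1 n,
          ((n.choose k : ℝ) / ((n + k).choose n)) * ((1 : ℝ) / (k : ℝ) ^ (2 * a + 1))) ∧
    (1 ≤ a →
      zetaStarO (List.replicate a 2 ++ [1])
        = 2 * ∑' k : ℕ, (1 : ℝ) / ((k : ℝ) + 1) ^ (2 * a + 1)) :=
  stmt19_general n a
end
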